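/- Whenever the first-occurrence index n_r^first exists, the first-occurrence set F_r = L_r(n_r^first) is conjugation-invariant: λ ∈ F_r if and only if λ' ∈ F_r. -/

import Mathlib

namespace PartitionLayers

open Nat Multiset

/-! ## The partition graph and local simplex dimension -/

/-- `q` is obtained from `p` by an elementary transfer: decrease one part by 1
(possibly deleting it if it reaches 0) and increase another part by 1
(where `b = 0` encodes the creation of a new part of size 1). -/
def IsTransfer {n : ℕ} (p q : Nat.Partition n) : Prop :=
  ∃ a ∈ p.parts, ∃ b : ℕ, (b = 0 ∨ b ∈ p.parts.erase a) ∧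
    q.parts = (b + 1) ::ₘ
      (if a = 1 then (p.parts.erase a).erase b
       else (a - 1) ::ₘ (p.parts.erase a).erase b)

/-- The partition graph `G_n` on `Par(n)`. -/
def partitionGraph (n : ℕ) : SimpleGraph (Nat.Partition n) where
  Adj p q := p ≠ q ∧ (IsTransfer p q ∨ IsTransfer q p)
  symm := ⟨fun _ _ h => ⟨h.1.symm, h.2.symm⟩⟩
  loopless := ⟨fun _ h => h.1 rfl⟩

/-- `ω_loc(λ)`: the maximum size of a clique of `G_n` containing `λ`. -/
noncomputable def omegaLoc {n : ℕ} (p : Nat.Partition n) : ℕ :=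
  sSup {k | ∃ s : Finset (Nat.Partition n), (partitionGraph n).IsNClique k s ∧ p ∈ s}

/-- The local simplex dimension `dim_loc(λ) = ω_loc(λ) - 1`. -/
noncomputable def dimLoc {n : ℕ} (p : Nat.Partition n) : ℕ :=
  omegaLoc p - 1

/-- The simplex layer `L_r(n) = {λ ⊢ n : dim_loc(λ) = r}`. -/
noncomputable def layer (n r : ℕ) : Set (Nat.Partition n) :=
  {p | dimLoc p = r}

/-- The realized layer spectrum `Spec_Δ(n)`. -/
noncomputable def Spec (n : ℕ) : Set ℕ :=
  {r | (layer n r).Nonempty}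

/-- The top local simplex dimension `Δ_loc(n) = max_{λ ⊢ n} dim_loc(λ)`. -/
noncomputable def DeltaLoc (n : ℕ) : ℕ :=
  sSup (Set.range (dimLoc (n := n)))

/-- The bottom local simplex dimension `δ_loc(n) = min_{λ ⊢ n} dim_loc(λ)`. -/
noncomputable def deltaLoc (n : ℕ) : ℕ :=
  sInf (Set.range (dimLoc (n := n)))

/-- The first-occurrence index `n_r^first = min {n ≥ 1 : L_r(n) ≠ ∅}`. -/
noncomputable def nFirst (r : ℕ) : ℕ :=
  sInf {n | 1 ≤ n ∧ (layer n r).Nonempty}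

/-! ## Conjugation -/

private lemma conj_sum_aux (N : ℕ) (s : Multiset ℕ) (hs : ∀ x ∈ s, x ≤ N) :
    ((Multiset.range N).map fun j => s.countP (fun p => decide (j < p))).sum = s.sum := by
  induction s using Multiset.induction with
  | empty => simp
  | cons a s ih =>
      have ha : a ≤ N := hs a (mem_cons_self a s)
      have hs' : ∀ x ∈ s, x ≤ N := fun x hx => hs x (mem_cons_of_mem hx)
      have hcnt : ∀ j : ℕ, (a ::ₘ s).countP (fun p => decide (j < p)) =
          s.countP (fun p => decide (j < p)) + if j < a then 1 else 0 := by
        intro j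
        rw [countP_cons]
        simp
      have hone : (∑ j ∈ Finset.range N, if j < a then (1 : ℕ) else 0) = a := by
        have hsub : Finset.range a ⊆ Finset.range N := Finset.range_subset_range.mpr ha
        rw [← Finset.sum_subset hsub (fun j _ hj => if_neg (by simpa using hj))]
        calc (∑ j ∈ Finset.range a, if j < a then (1 : ℕ) else 0)
            = ∑ _j ∈ Finset.range a, (1 : ℕ) :=
              Finset.sum_congr rfl (fun j hj => if_pos (Finset.mem_range.mp hj))
          _ = a := by simp
      calc ((Multiset.range N).map fun j => (a ::ₘ s).countP (fun p => decide (j < p))).sum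
          = ((Multiset.range N).map fun j =>
              s.countP (fun p => decide (j < p)) + if j < a then 1 else 0).sum := by
            congr 1
            exact Multiset.map_congr rfl (fun j _ => hcnt j)
        _ = ((Multiset.range N).map fun j => s.countP (fun p => decide (j < p))).sum
              + ((Multiset.range N).map fun j => if j < a then 1 else 0).sum := by
            rw [← Multiset.sum_map_add]
        _ = s.sum + a := by
            rw [ih hs']
            congr 1
        _ = (a ::ₘ s).sum := by rw [Multiset.sum_cons]; omega

/-- The conjugate (transpose) partition `λ'`: its `j`-th column length is the
number of parts of `λ` exceeding `j`. -/
def conj {n : ℕ} (p : Nat.Partition n) : Nat.Partition n :=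
  Nat.Partition.ofSums n
    ((Multiset.range n).map fun j => p.parts.countP (fun q => decide (j < q)))
    (by
      have hle : ∀ x ∈ p.parts, x ≤ n := by
        intro x hx
        have h1 := Multiset.single_le_sum (fun y _ => Nat.zero_le y) x hx
        rw [p.parts_sum] at h1
        exact h1
      rw [conj_sum_aux n p.parts hle]
      exact p.parts_sum)

/-! ## Corners, admissible transfers, and the star/top capacities -/

/-- The weakly decreasing part function of a partition: `partFun p i` is the
`i`-th part (0-indexed), with value `0` beyond the number of parts.  Its Young
diagram is `{(i, j) : j < partFun p i}`. -/
def partFun {n : ℕ} (p : Nat.Partition n) : ℕ → ℕ :=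
  fun i => ((p.parts.sort (· ≤ ·)).reverse).getD i 0

/-- Row `i` contains a removable corner of the diagram with row lengths `f`
(namely the cell `(i, f i - 1)`). -/
def HasRemovableCorner (f : ℕ → ℕ) (i : ℕ) : Prop :=
  f (i + 1) < f i

/-- Row `j` contains an addable corner of the diagram with row lengths `f`
(namely the position `(j, f j)`). -/
def HasAddableCorner (f : ℕ → ℕ) (j : ℕ) : Prop :=
  j = 0 ∨ f j < f (j - 1)

/-- The row-length function obtained by moving one cell from the end of row `i`
to the end of row `j`. -/
def transferFun (f : ℕ → ℕ) (i j : ℕ) : ℕ → ℕ :=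
  Function.update (Function.update f i (f i - 1)) j (f j + 1)

/-- The transfer `λ(c → a)` moving the removable corner in row `i` to the
addable corner in row `j` is admissible: it yields a partition (the resulting
row lengths are weakly decreasing) distinct from the original one. -/
def AdmissibleTransfer (f : ℕ → ℕ) (i j : ℕ) : Prop :=
  HasRemovableCorner f i ∧ HasAddableCorner f j ∧ i ≠ j ∧
    ∀ k, transferFun f i j (k + 1) ≤ transferFun f i j k

/-- The star-capacity `s(λ)`: the maximum, over removable corners `c` of `λ`,
of the number of addable corners `a` with `λ(c → a)` admissible.  (Rows are
indexed in `range (n+1)`, which contains all corner rows; rows without a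
removable corner contribute `0`.) -/
noncomputable def sCap {n : ℕ} (p : Nat.Partition n) : ℕ :=
  (Finset.range (n + 1)).sup fun i =>
    Set.ncard {j | AdmissibleTransfer (partFun p) i j}

/-- The top-capacity `t(λ)`: the maximum, over addable corners `a` of `λ`,
of the number of removable corners `c` with `λ(c → a)` admissible. -/
noncomputable def tCap {n : ℕ} (p : Nat.Partition n) : ℕ :=
  (Finset.range (n + 1)).sup fun j =>
    Set.ncard {i | AdmissibleTransfer (partFun p) i j}

/-! ## Adjacent-layer phase boundaries -/

/-- The adjacent-layer edge boundary `∂^E_{r,r+1}(n)`: edges of `G_n` joining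
`L_r(n)` to `L_{r+1}(n)`. -/
noncomputable def edgeBoundary (n r : ℕ) : Set (Sym2 (Nat.Partition n)) :=
  {e | ∃ p q, (partitionGraph n).Adj p q ∧ p ∈ layer n r ∧ q ∈ layer n (r + 1) ∧ e = s(p, q)}

/-- The adjacent-layer vertex boundary `∂^V_{r,r+1}(n)`: vertices incident to
an edge of `∂^E_{r,r+1}(n)`. -/
noncomputable def vertexBoundary (n r : ℕ) : Set (Nat.Partition n) :=
  {v | ∃ e ∈ edgeBoundary n r, v ∈ e}

/-- The lower-side boundary `∂^-_{r,r+1}(n) = ∂^V_{r,r+1}(n) ∩ L_r(n)`. -/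
noncomputable def lowerBoundary (n r : ℕ) : Set (Nat.Partition n) :=
  vertexBoundary n r ∩ layer n r

/-- The upper-side boundary `∂^+_{r,r+1}(n) = ∂^V_{r,r+1}(n) ∩ L_{r+1}(n)`. -/
noncomputable def upperBoundary (n r : ℕ) : Set (Nat.Partition n) :=
  vertexBoundary n r ∩ layer n (r + 1)




/-! ## Auxiliary development for the proof -/

section Aux

/-- `gg s j` counts the parts of `s` exceeding `j`. -/
def gg (s : Multiset ℕ) (j : ℕ) : ℕ := s.countP (fun q => decide (j < q))

lemma gg_cons (a : ℕ) (s : Multiset ℕ) (j : ℕ) :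
    gg (a ::ₘ s) j = gg s j + if j < a then 1 else 0 := by
  simp [gg, countP_cons]

lemma gg_erase {a : ℕ} {s : Multiset ℕ} (h : a ∈ s) (j : ℕ) :
    gg s j = gg (s.erase a) j + if j < a then 1 else 0 := by
  conv_lhs => rw [← Multiset.cons_erase h]
  rw [gg_cons]

lemma gg_succ (s : Multiset ℕ) (v : ℕ) : gg s v = gg s (v + 1) + s.count (v + 1) := by
  induction s using Multiset.induction with
  | empty => simp [gg]
  | cons a s ih =>
      rw [gg_cons, gg_cons, Multiset.count_cons, ih]
      split_ifs <;> omega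

lemma gg_anti (s : Multiset ℕ) {c d : ℕ} (h : c ≤ d) : gg s d ≤ gg s c := by
  induction s using Multiset.induction with
  | empty => simp [gg]
  | cons a s ih =>
      rw [gg_cons, gg_cons]
      have : (if d < a then 1 else 0) ≤ (if c < a then 1 else 0) := by
        split_ifs <;> omega
      omega

lemma eq_of_gg {s t : Multiset ℕ} (hs : 0 ∉ s) (ht : 0 ∉ t)
    (h : ∀ j, gg s j = gg t j) : s = t := by
  ext v
  cases v with
  | zero =>
      rw [Multiset.count_eq_zero_of_notMem hs, Multiset.count_eq_zero_of_notMem ht]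
  | succ v =>
      have h1 := gg_succ s v
      have h2 := gg_succ t v
      have := h v
      have := h (v + 1)
      omega

lemma gg_filter_ne (m : Multiset ℕ) (j : ℕ) : gg (m.filter (· ≠ 0)) j = gg m j := by
  induction m using Multiset.induction with
  | empty => simp [gg]
  | cons a s ih =>
      rw [Multiset.filter_cons]
      by_cases h : a = 0
      · subst h
        rw [if_neg (by simp), zero_add, ih, gg_cons, if_neg (by omega), add_zero]
      · rw [if_pos h, Multiset.singleton_add, gg_cons, gg_cons, ih]

variable {n : ℕ}

lemma parts_le (p : Nat.Partition n) {x : ℕ} (hx : x ∈ p.parts) : x ≤ n := by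
  have := Multiset.single_le_sum (fun y _ => Nat.zero_le y) x hx
  rwa [p.parts_sum] at this

lemma zero_not_mem_parts (p : Nat.Partition n) : 0 ∉ p.parts := by
  intro h0
  exact absurd (p.parts_pos h0) (lt_irrefl 0)

lemma gg_parts_le (p : Nat.Partition n) (j : ℕ) : gg p.parts j ≤ n := by
  have h1 : gg p.parts j ≤ Multiset.card p.parts := Multiset.countP_le_card _ _
  have h2 : Multiset.card p.parts • 1 ≤ p.parts.sum :=
    Multiset.card_nsmul_le_sum (fun x hx => p.parts_pos hx)
  have h3 := p.parts_sum
  simp only [smul_eq_mul, mul_one] at h2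
  omega

lemma gg_parts_eq_zero (p : Nat.Partition n) {j : ℕ} (h : n ≤ j) : gg p.parts j = 0 := by
  rw [gg, Multiset.countP_eq_zero]
  intro x hx
  have := parts_le p hx
  simp only [decide_eq_true_eq]
  omega

/-- The dual count: number of indices `c < n` whose column count exceeds `j`. -/
def Dc (s : Multiset ℕ) (n j : ℕ) : ℕ :=
  gg ((Multiset.range n).map fun c => gg s c) j

lemma gg_conj_parts (p : Nat.Partition n) (j : ℕ) :
    gg (conj p).parts j = Dc p.parts n j := by
  show gg ((((Multiset.range n).map fun c =>
      p.parts.countP (fun q => decide (c < q)))).filter (· ≠ 0)) j = _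
  rw [gg_filter_ne]
  rfl

lemma Dc_eq_card (s : Multiset ℕ) (n j : ℕ) :
    Dc s n j = ((Finset.range n).filter (fun c => j < gg s c)).card := by
  rw [Dc, gg, Multiset.countP_map, Finset.card_def, Finset.filter_val, Finset.range_val]
  congr 1
  apply Multiset.filter_congr
  intro x _
  simp

lemma lt_Dc_iff (p : Nat.Partition n) (c j : ℕ) :
    j < Dc p.parts n c ↔ c < gg p.parts j := by
  rw [Dc_eq_card]
  constructor
  · intro h
    by_contra hc
    push_neg at hc
    have hsub : (Finset.range n).filter (fun d => c < gg p.parts d) ⊆ Finset.range j := by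
      intro d hd
      simp only [Finset.mem_filter, Finset.mem_range] at hd ⊢
      by_contra hdj
      push_neg at hdj
      have := gg_anti p.parts hdj
      omega
    have hcard := Finset.card_le_card hsub
    rw [Finset.card_range] at hcard
    omega
  · intro h
    have hjn : j < n := by
      by_contra hjn
      push_neg at hjn
      rw [gg_parts_eq_zero p hjn] at h
      omega
    have hsub : Finset.range (j + 1) ⊆ (Finset.range n).filter (fun d => c < gg p.parts d) := by
      intro d hd
      rw [Finset.mem_range] at hd
      rw [Finset.mem_filter, Finset.mem_range]
      refine ⟨by omega, ?_⟩
      have := gg_anti p.parts (show d ≤ j by omega)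
      omega
    have hcard := Finset.card_le_card hsub
    rw [Finset.card_range] at hcard
    omega

lemma gg_conj_conj (p : Nat.Partition n) (j : ℕ) :
    gg (conj (conj p)).parts j = gg p.parts j := by
  rw [gg_conj_parts, Dc_eq_card]
  have heq : ((Finset.range n).filter (fun c => j < gg (conj p).parts c))
      = Finset.range (gg p.parts j) := by
    ext c
    simp only [Finset.mem_filter, Finset.mem_range]
    rw [gg_conj_parts, lt_Dc_iff]
    constructor
    · exact fun h => h.2
    · intro h
      have := gg_parts_le p j
      exact ⟨by omega, h⟩
  rw [heq, Finset.card_range]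

lemma conj_conj (p : Nat.Partition n) : conj (conj p) = p := by
  apply Nat.Partition.ext
  exact eq_of_gg (zero_not_mem_parts _) (zero_not_mem_parts _) (gg_conj_conj p)

lemma conj_injective : Function.Injective (conj (n := n)) := by
  intro p q h
  have := congrArg conj h
  rwa [conj_conj, conj_conj] at this

lemma mem_conj_parts (p : Nat.Partition n) {c : ℕ} (hc : c < n)
    (hpos : 0 < gg p.parts c) : gg p.parts c ∈ (conj p).parts := by
  show _ ∈ (((Multiset.range n).map fun j =>
      p.parts.countP (fun q => decide (j < q))).filter (· ≠ 0))
  rw [Multiset.mem_filter]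
  refine ⟨?_, by omega⟩
  rw [Multiset.mem_map]
  exact ⟨c, Multiset.mem_range.mpr hc, rfl⟩

lemma count_conj_parts (p : Nat.Partition n) {v : ℕ} (hv : v ≠ 0) :
    (conj p).parts.count v
      = ((Finset.range n).filter (fun c => v = gg p.parts c)).card := by
  show Multiset.count v
      (((Multiset.range n).map fun j =>
        p.parts.countP (fun q => decide (j < q))).filter (· ≠ 0)) = _
  rw [Multiset.count_filter, if_pos hv, Multiset.count_map,
    Finset.card_def, Finset.filter_val, Finset.range_val]
  congr 1

lemma mem_conj_parts_erase (p : Nat.Partition n) {c d : ℕ} (hc : c < n) (hd : d < n)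
    (hne : c ≠ d) (heq : gg p.parts c = gg p.parts d) (hpos : 0 < gg p.parts c) :
    gg p.parts c ∈ (conj p).parts.erase (gg p.parts c) := by
  rw [← Multiset.count_pos, Multiset.count_erase_self]
  have h2 : 2 ≤ (conj p).parts.count (gg p.parts c) := by
    rw [count_conj_parts p (by omega)]
    have hsub : ({c, d} : Finset ℕ)
        ⊆ (Finset.range n).filter (fun e => gg p.parts c = gg p.parts e) := by
      intro e he
      simp only [Finset.mem_insert, Finset.mem_singleton] at he
      rw [Finset.mem_filter, Finset.mem_range]
      rcases he with rfl | rfl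
      · exact ⟨hc, rfl⟩
      · exact ⟨hd, heq⟩
    have hcard := Finset.card_le_card hsub
    rwa [Finset.card_pair hne] at hcard
  omega

/-! ### Transfers in terms of `gg` -/

lemma gg_erase_erase (p : Nat.Partition n) {a b : ℕ} (ha : a ∈ p.parts)
    (hb : b = 0 ∨ b ∈ p.parts.erase a) (j : ℕ) :
    gg (p.parts.erase a) j
      = gg ((p.parts.erase a).erase b) j + if b = 0 then 0 else if j < b then 1 else 0 := by
  rcases hb with rfl | hb
  · have h0 : (0 : ℕ) ∉ p.parts.erase a := fun h0 =>
      absurd (p.parts_pos (Multiset.mem_of_mem_erase h0)) (lt_irrefl 0)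
    rw [Multiset.erase_of_notMem h0, if_pos rfl, add_zero]
  · have hbpos : 0 < b := p.parts_pos (Multiset.mem_of_mem_erase hb)
    rw [gg_erase hb j, if_neg (show ¬b = 0 by omega)]

lemma gg_transfer_target (p : Nat.Partition n) (a b j : ℕ) (ha1 : 1 ≤ a) :
    gg ((b + 1) ::ₘ
        (if a = 1 then (p.parts.erase a).erase b
          else (a - 1) ::ₘ (p.parts.erase a).erase b)) j
      = (if j < b + 1 then 1 else 0)
        + ((if a = 1 then 0 else if j < a - 1 then 1 else 0)
          + gg ((p.parts.erase a).erase b) j) := by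
  by_cases h1 : a = 1
  · simp only [if_pos h1]
    rw [gg_cons]
    omega
  · simp only [if_neg h1]
    rw [gg_cons, gg_cons]
    omega

lemma transfer_decomp {p q : Nat.Partition n} (h : IsTransfer p q) :
    ∃ a b : ℕ, a ∈ p.parts ∧ (b = 0 ∨ b ∈ p.parts.erase a) ∧
      ∀ j, gg q.parts j + (if j = a - 1 then 1 else 0)
        = gg p.parts j + (if j = b then 1 else 0) := by
  obtain ⟨a, ha, b, hb, heq⟩ := h
  refine ⟨a, b, ha, hb, fun j => ?_⟩
  have ha1 : 1 ≤ a := p.parts_pos ha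
  have hpa : gg p.parts j = gg (p.parts.erase a) j + if j < a then 1 else 0 := gg_erase ha j
  have hpb := gg_erase_erase p ha hb j
  have hq : gg q.parts j
      = (if j < b + 1 then 1 else 0)
        + ((if a = 1 then 0 else if j < a - 1 then 1 else 0)
          + gg ((p.parts.erase a).erase b) j) := by
    rw [heq]
    exact gg_transfer_target p a b j ha1
  rw [hq, hpa, hpb]
  split_ifs <;> omega

lemma transfer_build (p q : Nat.Partition n) (a b : ℕ) (ha : a ∈ p.parts)
    (hb : b = 0 ∨ b ∈ p.parts.erase a)
    (h : ∀ j, gg q.parts j + (if j = a - 1 then 1 else 0)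
      = gg p.parts j + (if j = b then 1 else 0)) : IsTransfer p q := by
  refine ⟨a, ha, b, hb, ?_⟩
  have ha1 : 1 ≤ a := p.parts_pos ha
  have hE : 0 ∉ (p.parts.erase a).erase b := by
    intro h0
    exact absurd (p.parts_pos (Multiset.mem_of_mem_erase (Multiset.mem_of_mem_erase h0)))
      (lt_irrefl 0)
  apply eq_of_gg (zero_not_mem_parts q)
  · intro h0
    rcases Multiset.mem_cons.mp h0 with h1 | h1
    · omega
    · split_ifs at h1 with h2
      · exact hE h1
      · rcases Multiset.mem_cons.mp h1 with h3 | h3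
        · omega
        · exact hE h3
  · intro j
    have hpa : gg p.parts j = gg (p.parts.erase a) j + if j < a then 1 else 0 := gg_erase ha j
    have hpb := gg_erase_erase p ha hb j
    rw [gg_transfer_target p a b j ha1]
    have hj := h j
    rw [hpa, hpb] at hj
    split_ifs at hj ⊢ <;> omega

lemma b_lt_n {p : Nat.Partition n} {a b : ℕ} (ha : a ∈ p.parts)
    (hb : b = 0 ∨ b ∈ p.parts.erase a) : b < n := by
  have ha1 : 1 ≤ a := p.parts_pos ha
  have han : a ≤ n := parts_le p ha
  rcases hb with rfl | hb
  · omega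
  · have h1 : b ≤ (p.parts.erase a).sum :=
      Multiset.single_le_sum (fun y _ => Nat.zero_le y) b hb
    have h2 : p.parts.sum = a + (p.parts.erase a).sum := by
      conv_lhs => rw [← Multiset.cons_erase ha]
      rw [Multiset.sum_cons]
    have h3 := p.parts_sum
    omega

lemma conj_transfer {p q : Nat.Partition n} (hne : p ≠ q) (h : IsTransfer p q) :
    IsTransfer (conj p) (conj q) := by
  obtain ⟨a, b, ha, hb, hgg⟩ := transfer_decomp h
  have ha1 : 1 ≤ a := p.parts_pos ha
  have han : a ≤ n := parts_le p ha
  have hbn : b < n := b_lt_n ha hb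
  have hanlt : a - 1 < n := by omega
  have hab : a - 1 ≠ b := by
    intro hab
    apply hne
    apply Nat.Partition.ext
    apply eq_of_gg (zero_not_mem_parts p) (zero_not_mem_parts q)
    intro j
    have := hgg j
    rw [hab] at this
    omega
  set A := gg p.parts (a - 1) with hA
  set B := gg p.parts b with hB
  have hA1 : 1 ≤ A := by
    have := hgg (a - 1)
    rw [if_pos rfl, if_neg hab] at this
    omega
  have hqa : gg q.parts (a - 1) = A - 1 := by
    have := hgg (a - 1)
    rw [if_pos rfl, if_neg hab] at this
    omega
  have hqb : gg q.parts b = B + 1 := by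
    have := hgg b
    rw [if_pos rfl, if_neg (show ¬b = a - 1 by omega)] at this
    omega
  have hqother : ∀ j, j ≠ a - 1 → j ≠ b → gg q.parts j = gg p.parts j := by
    intro j h1 h2
    have := hgg j
    rw [if_neg h1, if_neg h2] at this
    omega
  have hconj : ∀ c, gg (conj q).parts c + (if c = A - 1 then 1 else 0)
      = gg (conj p).parts c + (if c = B then 1 else 0) := by
    intro c
    rw [gg_conj_parts, gg_conj_parts, Dc_eq_card, Dc_eq_card,
      Finset.card_filter, Finset.card_filter]
    have e1 : (if c = A - 1 then 1 else 0)
        = ∑ j ∈ Finset.range n, if j = a - 1 then (if c = A - 1 then 1 else 0) else 0 := by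
      rw [Finset.sum_ite_eq' (Finset.range n) (a - 1)
        (fun _ => if c = A - 1 then 1 else 0), if_pos (Finset.mem_range.mpr hanlt)]
    have e2 : (if c = B then 1 else 0)
        = ∑ j ∈ Finset.range n, if j = b then (if c = B then 1 else 0) else 0 := by
      rw [Finset.sum_ite_eq' (Finset.range n) b (fun _ => if c = B then 1 else 0),
        if_pos (Finset.mem_range.mpr hbn)]
    rw [e1, e2, ← Finset.sum_add_distrib, ← Finset.sum_add_distrib]
    apply Finset.sum_congr rfl
    intro j _
    by_cases h1 : j = a - 1
    · subst h1
      rw [hqa]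
      split_ifs <;> omega
    · by_cases h2 : j = b
      · subst h2
        rw [hqb]
        split_ifs <;> omega
      · rw [hqother j h1 h2]
        split_ifs <;> omega
  have hAmem : A ∈ (conj p).parts := mem_conj_parts p hanlt (by omega)
  have hBmem : B = 0 ∨ B ∈ (conj p).parts.erase A := by
    by_cases hB0 : B = 0
    · exact Or.inl hB0
    · right
      by_cases hAB : B = A
      · rw [hAB]
        exact mem_conj_parts_erase p hanlt hbn hab hAB.symm (by omega)
      · rw [Multiset.mem_erase_of_ne hAB]
        exact mem_conj_parts p hbn (by omega)
  apply transfer_build (conj p) (conj q) A B hAmem hBmem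
  intro j
  have := hconj j
  omega

lemma conj_adj {p q : Nat.Partition n} (h : (partitionGraph n).Adj p q) :
    (partitionGraph n).Adj (conj p) (conj q) := by
  refine ⟨fun he => h.1 (conj_injective he), ?_⟩
  rcases h.2 with ht | ht
  · exact Or.inl (conj_transfer h.1 ht)
  · exact Or.inr (conj_transfer (Ne.symm h.1) ht)

/-! ### Cliques and layers are conjugation-invariant -/

lemma clique_set_subset (p : Nat.Partition n) :
    {k | ∃ s : Finset (Nat.Partition n), (partitionGraph n).IsNClique k s ∧ p ∈ s}
      ⊆ {k | ∃ s : Finset (Nat.Partition n), (partitionGraph n).IsNClique k s ∧ conj p ∈ s} := by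
  rintro k ⟨s, hs, hp⟩
  refine ⟨s.image conj, ⟨?_, ?_⟩, Finset.mem_image_of_mem conj hp⟩
  · intro x hx y hy hxy
    simp only [Finset.coe_image, Set.mem_image, Finset.mem_coe] at hx hy
    obtain ⟨u, hu, rfl⟩ := hx
    obtain ⟨v, hv, rfl⟩ := hy
    have huv : u ≠ v := fun h => hxy (by rw [h])
    exact conj_adj (hs.1 hu hv huv)
  · rw [Finset.card_image_of_injective s conj_injective]
    exact hs.2

lemma omegaLoc_conj (p : Nat.Partition n) : omegaLoc (conj p) = omegaLoc p := by
  unfold omegaLoc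
  congr 1
  apply Set.Subset.antisymm
  · have := clique_set_subset (conj p)
    rwa [conj_conj] at this
  · exact clique_set_subset p

lemma dimLoc_conj (p : Nat.Partition n) : dimLoc (conj p) = dimLoc p := by
  unfold dimLoc
  rw [omegaLoc_conj]

lemma layer_conj_iff (p : Nat.Partition n) (r : ℕ) :
    p ∈ layer n r ↔ conj p ∈ layer n r := by
  simp only [layer, Set.mem_setOf_eq, dimLoc_conj]

end Aux

/-- whenever the first-occurrence index `n_r^first` exists, the
first-occurrence set `F_r = L_r(n_r^first)` is conjugation-invariant:
`λ ∈ F_r ↔ λ' ∈ F_r`. -/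
theorem first_occurrence_set_conj_invariant (r : ℕ)
    (h : ∃ n : ℕ, 1 ≤ n ∧ (layer n r).Nonempty) (p : Nat.Partition (nFirst r)) :
    p ∈ layer (nFirst r) r ↔ conj p ∈ layer (nFirst r) r := by
  exact layer_conj_iff p r

end PartitionLayers
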